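/- arXiv:1901.10865 — 4 statements merged into one kernel-verified Lean document; each statement's English description precedes it below -/
import Mathlib

section
/- Let M ≥ 1, p > 2, a_i, b_i > 0, d_ij ≥ 0 (i ≠ j), d_ij = d_ji, α_ij, β_ij > 1, α_ij + β_ij = p, α_ji = β_ij, and suppose p·b_i > 2·Σ_{j≠i} d_ij β_ij for every i. Define J(s) = Σ_i a_i s_i² − Σ_i b_i s_i^p + Σ_{i≠j} d_ij s_j^{α_ij} s_i^{β_ij}. Then there exist 0 < r < R < ∞ such that sup_{s ∈ (0,∞)^M} J(s) = max_{s ∈ [r,R]^M} J(s); in particular, J attains its maximum on (0,∞)^M. -/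
/-!
Young's inequality `x ^ α * y ^ β ≤ (α x ^ p + β y ^ p) / p`, combined with `d i j = d j i` and
`α j i = β i j`, bounds the coupling term by `∑ i, (2 / p ∑ j, d i j β i j) s i ^ p`. By
coercivity, `J s ≤ ∑ i, (a i s i ^ 2 - c i s i ^ p)` with every `c i > 0`, and each summand tends
to `-∞`; so `J s < J (r, …, r)` as soon as one coordinate of `s ≥ r` exceeds some `R`. Near `0`
each `a i x ^ 2 - b i x ^ p` is increasing and the coupling term is monotone, so raising all
coordinates to at least `r` does not decrease `J`. The supremum over `(0, ∞)^M` is therefore the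
maximum over the compact box `[r, R]^M`.
-/

open Finset Filter Topology Set

lemma Real.rpow_mul_rpow_le_of_add_eq {p A B x y : ℝ} (hp : 0 < p) (hx : 0 ≤ x) (hy : 0 ≤ y)
    (hA : 0 ≤ A) (hB : 0 ≤ B) (hAB : A + B = p) :
    x ^ A * y ^ B ≤ A / p * x ^ p + B / p * y ^ p := by
  have h := Real.geom_mean_le_arith_mean2_weighted (div_nonneg hA hp.le) (div_nonneg hB hp.le)
    (Real.rpow_nonneg hx p) (Real.rpow_nonneg hy p) (by field_simp; linarith)
  rwa [← Real.rpow_mul hx, ← Real.rpow_mul hy, mul_div_cancel₀ _ hp.ne',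
    mul_div_cancel₀ _ hp.ne'] at h

lemma monotoneOn_sq_sub_rpow {a b p r : ℝ} (hb : 0 ≤ b) (hp : 2 ≤ p)
    (hr : p * b * r ^ (p - 2) ≤ 2 * a) :
    MonotoneOn (fun x : ℝ => a * x ^ (2 : ℝ) - b * x ^ p) (Icc 0 r) := by
  have hderiv : ∀ x : ℝ, 0 < x → HasDerivAt (fun x : ℝ => a * x ^ (2 : ℝ) - b * x ^ p)
      (x * (2 * a - p * b * x ^ (p - 2))) x := by
    intro x hx
    refine (((Real.hasDerivAt_rpow_const (p := 2) (Or.inl hx.ne')).const_mul a).sub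
      ((Real.hasDerivAt_rpow_const (p := p) (Or.inl hx.ne')).const_mul b)).congr_deriv ?_
    rw [show p - 1 = (p - 2) + 1 by ring, Real.rpow_add hx, Real.rpow_one]
    norm_num
    ring
  refine monotoneOn_of_deriv_nonneg (convex_Icc 0 r) ?_ ?_ ?_
  · exact Continuous.continuousOn (by fun_prop (disch := positivity))
  · rw [interior_Icc]
    exact fun x hx => (hderiv x hx.1).differentiableAt.differentiableWithinAt
  · rw [interior_Icc]
    intro x hx
    rw [(hderiv x hx.1).deriv]
    have hpow : x ^ (p - 2) ≤ r ^ (p - 2) := Real.rpow_le_rpow hx.1.le hx.2.le (by linarith)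
    have := mul_le_mul_of_nonneg_left hpow (by positivity : 0 ≤ p * b)
    exact mul_nonneg hx.1.le (by linarith)

lemma eventually_monotoneOn_sq_sub_rpow {a b p : ℝ} (ha : 0 < a) (hb : 0 ≤ b) (hp : 2 < p) :
    ∀ᶠ r in 𝓝[>] 0, MonotoneOn (fun x : ℝ => a * x ^ (2 : ℝ) - b * x ^ p) (Icc 0 r) := by
  have hcont : ContinuousAt (fun r : ℝ => p * b * r ^ (p - 2)) 0 :=
    continuousAt_const.mul (Real.continuousAt_rpow_const _ _ (Or.inr (by linarith)))
  have hlt : ∀ᶠ r in 𝓝 0, p * b * r ^ (p - 2) < 2 * a :=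
    hcont.eventually_lt continuousAt_const (by simp [Real.zero_rpow (by linarith : p - 2 ≠ 0), ha])
  exact (hlt.filter_mono nhdsWithin_le_nhds).mono fun r hr => monotoneOn_sq_sub_rpow hb hp.le hr.le

lemma tendsto_sq_sub_rpow_atBot {a c p : ℝ} (hc : 0 < c) (hp : 2 < p) :
    Tendsto (fun x : ℝ => a * x ^ (2 : ℝ) - c * x ^ p) atTop atBot := by
  have hlim : Tendsto (fun x : ℝ => a * x ^ (-(p - 2)) - c) atTop (𝓝 (a * 0 - c)) :=
    ((tendsto_rpow_neg_atTop (by linarith)).const_mul a).sub_const c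
  rw [mul_zero, zero_sub] at hlim
  refine ((tendsto_rpow_atTop (by linarith)).atTop_mul_neg (neg_lt_zero.2 hc) hlim).congr' ?_
  filter_upwards [eventually_gt_atTop 0] with x hx
  rw [mul_sub, mul_left_comm, ← Real.rpow_add hx]
  ring_nf

lemma Continuous.bddAbove_image_Ici_of_tendsto_atBot {g : ℝ → ℝ} (hg : Continuous g)
    (h : Tendsto g atTop atBot) (x₀ : ℝ) : BddAbove (g '' Ici x₀) := by
  obtain ⟨X, hX⟩ := eventually_atTop.1 (h.eventually (eventually_le_atBot 0))
  obtain ⟨B, hB⟩ := (isCompact_Icc (a := x₀) (b := X)).bddAbove_image hg.continuousOn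
  refine ⟨max B 0, ?_⟩
  rintro _ ⟨x, hx, rfl⟩
  rcases le_total x X with hxX | hXx
  · exact le_max_of_le_left (hB ⟨x, ⟨hx, hxX⟩, rfl⟩)
  · exact le_max_of_le_right (hX x hXx)

lemma eventually_sum_lt_of_tendsto_atBot {ι : Type*} [Fintype ι]
    {g : ι → ℝ → ℝ} {S : Set ℝ} (hbdd : ∀ i, BddAbove (g i '' S))
    (htend : ∀ i, Tendsto (g i) atTop atBot) (V : ℝ) :
    ∀ᶠ R in atTop, ∀ x : ι → ℝ, (∀ i, x i ∈ S) → ∀ k, R ≤ x k → ∑ i, g i (x i) < V := by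
  classical
  choose B hB using hbdd
  set C := ∑ i, max (B i) 0
  have htail : ∀ k, ∀ᶠ R in atTop, ∀ y, R ≤ y → g k y < V - C := fun k =>
    eventually_forall_ge_atTop.2 ((htend k).eventually (eventually_lt_atBot (V - C)))
  filter_upwards [eventually_all.2 htail] with R hR x hx k hk
  have hrest : ∑ i ∈ univ.erase k, g i (x i) ≤ C :=
    calc ∑ i ∈ univ.erase k, g i (x i) ≤ ∑ i ∈ univ.erase k, max (B i) 0 :=
          sum_le_sum fun i _ => le_max_of_le_left (hB i ⟨x i, hx i, rfl⟩)
      _ ≤ C := sum_le_sum_of_subset_of_nonneg (subset_univ _) fun i _ _ => le_max_right _ _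
  rw [← add_sum_erase _ _ (mem_univ k)]
  linarith [hR k (x k) hk]

section Energy

variable {ι : Type*} [Fintype ι] [DecidableEq ι] {a b : ι → ℝ} {p : ℝ} {d α β : ι → ι → ℝ}

noncomputable def crossTerm (d α β : ι → ι → ℝ) (s : ι → ℝ) : ℝ :=
  ∑ i, ∑ j ∈ univ.filter (· ≠ i), d i j * s j ^ α i j * s i ^ β i j

noncomputable def energy (a b : ι → ℝ) (p : ℝ) (d α β : ι → ι → ℝ) (s : ι → ℝ) : ℝ :=
  ∑ i, a i * s i ^ (2 : ℝ) - ∑ i, b i * s i ^ p + crossTerm d α β s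

lemma energy_eq_sum_add_crossTerm (s : ι → ℝ) :
    energy a b p d α β s = ∑ i, (a i * s i ^ (2 : ℝ) - b i * s i ^ p) + crossTerm d α β s := by
  rw [energy, sum_sub_distrib]

lemma sum_offDiag_comm {γ : Type*} [AddCommMonoid γ] (f : ι → ι → γ) :
    ∑ i, ∑ j ∈ univ.filter (· ≠ i), f i j = ∑ i, ∑ j ∈ univ.filter (· ≠ i), f j i :=
  sum_comm' fun x y => by simp [ne_comm]

lemma crossTerm_le (hp : 0 < p) (hd : ∀ i j, i ≠ j → 0 ≤ d i j)
    (hdsymm : ∀ i j, i ≠ j → d i j = d j i)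
    (hα : ∀ i j, i ≠ j → 0 ≤ α i j) (hβ : ∀ i j, i ≠ j → 0 ≤ β i j)
    (hαβp : ∀ i j, i ≠ j → α i j + β i j = p) (hsymm : ∀ i j, i ≠ j → α j i = β i j)
    {s : ι → ℝ} (hs : ∀ i, 0 ≤ s i) :
    crossTerm d α β s ≤ ∑ i, (2 / p * ∑ j ∈ univ.filter (· ≠ i), d i j * β i j) * s i ^ p := by
  have hyoung : crossTerm d α β s ≤ ∑ i, ∑ j ∈ univ.filter (· ≠ i),
      (d i j * α i j / p * s j ^ p + d i j * β i j / p * s i ^ p) := by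
    refine sum_le_sum fun i _ => sum_le_sum fun j hj => ?_
    have hij : i ≠ j := (mem_filter.1 hj).2.symm
    calc d i j * s j ^ α i j * s i ^ β i j = d i j * (s j ^ α i j * s i ^ β i j) := mul_assoc ..
      _ ≤ d i j * (α i j / p * s j ^ p + β i j / p * s i ^ p) :=
          mul_le_mul_of_nonneg_left (Real.rpow_mul_rpow_le_of_add_eq hp (hs j) (hs i)
            (hα i j hij) (hβ i j hij) (hαβp i j hij)) (hd i j hij)
      _ = d i j * α i j / p * s j ^ p + d i j * β i j / p * s i ^ p := by ring
  -- The symmetry hypotheses make the two halves of Young's bound equal after swapping `i, j`.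
  have hswap : ∑ i, ∑ j ∈ univ.filter (· ≠ i), d i j * α i j / p * s j ^ p
      = ∑ i, ∑ j ∈ univ.filter (· ≠ i), d i j * β i j / p * s i ^ p := by
    rw [sum_offDiag_comm]
    refine sum_congr rfl fun i _ => sum_congr rfl fun j hj => ?_
    have hij : i ≠ j := (mem_filter.1 hj).2.symm
    rw [hsymm i j hij, hdsymm j i hij.symm]
  simp only [sum_add_distrib, hswap] at hyoung
  convert hyoung using 1
  rw [← sum_add_distrib]
  refine sum_congr rfl fun i _ => ?_
  rw [← sum_add_distrib, mul_sum, sum_mul]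
  exact sum_congr rfl fun j _ => by ring

lemma energy_le_sum_sq_sub_rpow (hp : 0 < p) (hd : ∀ i j, i ≠ j → 0 ≤ d i j)
    (hdsymm : ∀ i j, i ≠ j → d i j = d j i)
    (hα : ∀ i j, i ≠ j → 0 ≤ α i j) (hβ : ∀ i j, i ≠ j → 0 ≤ β i j)
    (hαβp : ∀ i j, i ≠ j → α i j + β i j = p) (hsymm : ∀ i j, i ≠ j → α j i = β i j)
    {s : ι → ℝ} (hs : ∀ i, 0 ≤ s i) :
    energy a b p d α β s ≤ ∑ i, (a i * s i ^ (2 : ℝ)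
      - (b i - 2 / p * ∑ j ∈ univ.filter (· ≠ i), d i j * β i j) * s i ^ p) := by
  rw [energy_eq_sum_add_crossTerm]
  calc _ ≤ ∑ i, (a i * s i ^ (2 : ℝ) - b i * s i ^ p)
        + ∑ i, (2 / p * ∑ j ∈ univ.filter (· ≠ i), d i j * β i j) * s i ^ p :=
        add_le_add_right (crossTerm_le hp hd hdsymm hα hβ hαβp hsymm hs) _
    _ = _ := by
        rw [← sum_add_distrib]
        exact sum_congr rfl fun i _ => by ring

lemma crossTerm_mono (hd : ∀ i j, i ≠ j → 0 ≤ d i j)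
    (hα : ∀ i j, i ≠ j → 0 ≤ α i j) (hβ : ∀ i j, i ≠ j → 0 ≤ β i j)
    {s t : ι → ℝ} (hs : ∀ i, 0 ≤ s i) (hst : s ≤ t) :
    crossTerm d α β s ≤ crossTerm d α β t := by
  refine sum_le_sum fun i _ => sum_le_sum fun j hj => ?_
  have hij : i ≠ j := (mem_filter.1 hj).2.symm
  exact mul_le_mul
    (mul_le_mul_of_nonneg_left (Real.rpow_le_rpow (hs j) (hst j) (hα i j hij)) (hd i j hij))
    (Real.rpow_le_rpow (hs i) (hst i) (hβ i j hij)) (Real.rpow_nonneg (hs i) _)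
    (mul_nonneg (hd i j hij) (Real.rpow_nonneg ((hs j).trans (hst j)) _))

lemma energy_le_energy_sup (hd : ∀ i j, i ≠ j → 0 ≤ d i j)
    (hα : ∀ i j, i ≠ j → 0 ≤ α i j) (hβ : ∀ i j, i ≠ j → 0 ≤ β i j) {r : ℝ}
    (hmono : ∀ i, MonotoneOn (fun x : ℝ => a i * x ^ (2 : ℝ) - b i * x ^ p) (Icc 0 r))
    {s : ι → ℝ} (hs : ∀ i, 0 ≤ s i) :
    energy a b p d α β s ≤ energy a b p d α β (s ⊔ fun _ => r) := by
  rw [energy_eq_sum_add_crossTerm, energy_eq_sum_add_crossTerm]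
  refine add_le_add (sum_le_sum fun i _ => ?_) (crossTerm_mono hd hα hβ hs le_sup_left)
  rcases le_total (s i) r with h | h
  · rw [Pi.sup_apply, max_eq_right h]
    exact hmono i ⟨hs i, h⟩ ⟨(hs i).trans h, le_rfl⟩ h
  · rw [Pi.sup_apply, max_eq_left h]

lemma continuous_energy (hp : 0 ≤ p) (hα : ∀ i j, i ≠ j → 0 ≤ α i j)
    (hβ : ∀ i j, i ≠ j → 0 ≤ β i j) : Continuous (energy a b p d α β) := by
  have hpow : ∀ i {e : ℝ}, 0 ≤ e → Continuous fun s : ι → ℝ => s i ^ e :=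
    fun i _ he => (Real.continuous_rpow_const he).comp (continuous_apply i)
  refine ((continuous_finsetSum _ fun i _ => ?_).sub (continuous_finsetSum _ fun i _ => ?_)).add
    (continuous_finsetSum _ fun i _ => continuous_finsetSum _ fun j hj => ?_)
  · exact continuous_const.mul (hpow i zero_le_two)
  · exact continuous_const.mul (hpow i hp)
  · have hij : i ≠ j := (mem_filter.1 hj).2.symm
    exact (continuous_const.mul (hpow j (hα i j hij))).mul (hpow i (hβ i j hij))

end Energy

theorem J_attains_max_general
    {M : ℕ} (p : ℝ) (hp : 2 < p)
    (a b : Fin M → ℝ) (d α β : Fin M → Fin M → ℝ)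
    (ha : ∀ i, 0 < a i) (hb : ∀ i, 0 < b i)
    (hd : ∀ i j, i ≠ j → 0 ≤ d i j)
    (hdsymm : ∀ i j, i ≠ j → d i j = d j i)
    (hα : ∀ i j, i ≠ j → 1 < α i j) (hβ : ∀ i j, i ≠ j → 1 < β i j)
    (hαβp : ∀ i j, i ≠ j → α i j + β i j = p)
    (hsymm : ∀ i j, i ≠ j → α j i = β i j)
    (hcoer : ∀ i, 2 * ∑ j ∈ Finset.univ.filter (· ≠ i), d i j * β i j < p * b i)
    (J : (Fin M → ℝ) → ℝ)
    (hJ : ∀ s : Fin M → ℝ,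
      J s = ∑ i, a i * s i ^ (2 : ℝ) - ∑ i, b i * s i ^ p
        + ∑ i, ∑ j ∈ Finset.univ.filter (· ≠ i),
            d i j * s j ^ α i j * s i ^ β i j) :
    ∃ r R : ℝ, 0 < r ∧ r < R ∧
      ∃ s₀ : Fin M → ℝ, (∀ i, s₀ i ∈ Set.Icc r R) ∧
        ∀ s : Fin M → ℝ, (∀ i, 0 < s i) → J s ≤ J s₀ := by
  obtain rfl : J = energy a b p d α β := funext hJ
  have hp₀ : 0 < p := by linarith
  have hα₀ : ∀ i j, i ≠ j → 0 ≤ α i j := fun i j h => zero_le_one.trans (hα i j h).le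
  have hβ₀ : ∀ i j, i ≠ j → 0 ≤ β i j := fun i j h => zero_le_one.trans (hβ i j h).le
  set c : Fin M → ℝ := fun i => b i - 2 / p * ∑ j ∈ univ.filter (· ≠ i), d i j * β i j
  have hc : ∀ i, 0 < c i := fun i => by
    rw [sub_pos, div_mul_eq_mul_div, div_lt_iff₀ hp₀]
    linarith [hcoer i]
  have htend : ∀ i, Tendsto (fun x : ℝ => a i * x ^ (2 : ℝ) - c i * x ^ p) atTop atBot :=
    fun i => tendsto_sq_sub_rpow_atBot (hc i) hp
  have hbdd : ∀ i, BddAbove ((fun x : ℝ => a i * x ^ (2 : ℝ) - c i * x ^ p) '' Ici 0) :=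
    fun i => Continuous.bddAbove_image_Ici_of_tendsto_atBot (by fun_prop (disch := positivity))
      (htend i) 0
  obtain ⟨r, hmono, hr⟩ := ((eventually_all.2 fun i =>
    eventually_monotoneOn_sq_sub_rpow (ha i) (hb i).le hp).and self_mem_nhdsWithin).exists
  obtain ⟨R, hR, hrR⟩ := ((eventually_sum_lt_of_tendsto_atBot hbdd htend
    (energy a b p d α β fun _ => r)).and (eventually_gt_atTop r)).exists
  have hcont : Continuous (energy a b p d α β) := continuous_energy hp₀.le hα₀ hβ₀
  obtain ⟨s₀, hs₀, hmax⟩ :=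
    isCompact_Icc.exists_isMaxOn (nonempty_Icc.2 fun _ => hrR.le) hcont.continuousOn
  refine ⟨r, R, hr, hrR, s₀, fun i => ⟨hs₀.1 i, hs₀.2 i⟩, fun s hs => ?_⟩
  refine (energy_le_energy_sup hd hα₀ hβ₀ hmono fun i => (hs i).le).trans ?_
  set t := s ⊔ fun _ => r
  by_cases htR : t ≤ fun _ => R
  · exact hmax ⟨le_sup_right, htR⟩
  · obtain ⟨k, hk⟩ : ∃ k, R < t k := by simpa [Pi.le_def] using htR
    have ht : ∀ i, 0 ≤ t i := fun i => le_sup_of_le_right hr.le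
    calc energy a b p d α β t ≤ ∑ i, (a i * t i ^ (2 : ℝ) - c i * t i ^ p) :=
          energy_le_sum_sq_sub_rpow hp₀ hd hdsymm hα₀ hβ₀ hαβp hsymm ht
      _ ≤ energy a b p d α β fun _ => r := (hR t ht k hk.le).le
      _ ≤ energy a b p d α β s₀ := hmax ⟨le_rfl, fun _ => hrR.le⟩

/-- Under the coercivity condition `p bᵢ > 2 Σ_{j≠i} dᵢⱼ βᵢⱼ`, the function `J`
attains its supremum over `(0,∞)^M` at a point of some box `[r,R]^M`. -/
theorem J_attains_max
    {M : ℕ} (hM : 1 ≤ M) (p : ℝ) (hp : 2 < p)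
    (a b : Fin M → ℝ) (d α β : Fin M → Fin M → ℝ)
    (ha : ∀ i, 0 < a i) (hb : ∀ i, 0 < b i)
    (hd : ∀ i j, i ≠ j → 0 ≤ d i j)
    (hdsymm : ∀ i j, i ≠ j → d i j = d j i)
    (hα : ∀ i j, i ≠ j → 1 < α i j) (hβ : ∀ i j, i ≠ j → 1 < β i j)
    (hαβp : ∀ i j, i ≠ j → α i j + β i j = p)
    (hsymm : ∀ i j, i ≠ j → α j i = β i j)
    (hcoer : ∀ i, 2 * ∑ j ∈ Finset.univ.filter (· ≠ i), d i j * β i j < p * b i)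
    (J : (Fin M → ℝ) → ℝ)
    (hJ : ∀ s : Fin M → ℝ,
      J s = ∑ i, a i * s i ^ (2 : ℝ) - ∑ i, b i * s i ^ p
        + ∑ i, ∑ j ∈ Finset.univ.filter (· ≠ i),
            d i j * s j ^ α i j * s i ^ β i j) :
    ∃ r R : ℝ, 0 < r ∧ r < R ∧
      ∃ s₀ : Fin M → ℝ, (∀ i, s₀ i ∈ Set.Icc r R) ∧
        ∀ s : Fin M → ℝ, (∀ i, 0 < s i) → J s ≤ J s₀ :=
  J_attains_max_general p hp a b d α β ha hb hd hdsymm hα hβ hαβp hsymm hcoer J hJ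
end

section
/- Under the hypotheses of the maximality lemma (p·b_i > 2·Σ_{j≠i} d_ij β_ij for all i), if s ∈ (0,∞)^M, i is an index with s_i = max{s_1,…,s_M}, and s_i ≥ R (with R chosen so that 2a_i t − (p b_i − 2 Σ_{j≠i} d_ij β_ij) t^{p−1} < 0 for t ≥ R), then ∂_i J(s) < 0. Similarly, if s_i ≤ r (with r chosen so that 2a_i t − p b_i t^{p−1} > 0 for t ∈ (0,r]), then ∂_i J(s) > 0. -/
open Finset

/-!
Every coupling term of `∂ᵢJ` is nonnegative, which gives the sign for small `sᵢ`. When `sᵢ` is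
the largest coordinate, `α + (β - 1) = p - 1` bounds each coupling term
`d β sⱼ^α sᵢ^(β-1)` by `d β sᵢ^(p-1)`, so the couplings only lower the coefficient `p bᵢ` of the
negative power to `p bᵢ - 2 ∑ⱼ dᵢⱼ βᵢⱼ`, and the choice of `R` gives the sign for large `sᵢ`.
-/

theorem Real.rpow_mul_rpow_le_rpow_add_of_le {x y a b : ℝ} (hx : 0 ≤ x) (hxy : x ≤ y)
    (hy : 0 < y) (ha : 0 ≤ a) : x ^ a * y ^ b ≤ y ^ (a + b) := by
  rw [Real.rpow_add hy]
  gcongr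

section CouplingSum

variable {ι : Type*} (S : Finset ι) (c α β : ι → ℝ) (x : ι → ℝ) (t : ℝ)

theorem coupling_sum_nonneg (hc : ∀ j ∈ S, 0 ≤ c j) (hx : ∀ j, 0 ≤ x j) (ht : 0 ≤ t) :
    0 ≤ ∑ j ∈ S, c j * x j ^ α j * t ^ (β j - 1) :=
  sum_nonneg fun j hj => by have := hc j hj; have := hx j; positivity

theorem coupling_sum_le_of_le {p : ℝ} (hc : ∀ j ∈ S, 0 ≤ c j) (hα : ∀ j ∈ S, 0 ≤ α j)
    (hαβ : ∀ j ∈ S, α j + β j = p) (hx : ∀ j, 0 ≤ x j) (hxt : ∀ j, x j ≤ t) (ht : 0 < t) :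
    ∑ j ∈ S, c j * x j ^ α j * t ^ (β j - 1) ≤ (∑ j ∈ S, c j) * t ^ (p - 1) := by
  rw [sum_mul]
  refine sum_le_sum fun j hj => ?_
  have hexp : α j + (β j - 1) = p - 1 := by linarith [hαβ j hj]
  rw [mul_assoc, ← hexp]
  exact mul_le_mul_of_nonneg_left
    (Real.rpow_mul_rpow_le_rpow_add_of_le (hx j) (hxt j) ht (hα j hj)) (hc j hj)

end CouplingSum

theorem partial_deriv_sign_general
    {M : ℕ} (p : ℝ)
    (a b : Fin M → ℝ) (d α β : Fin M → Fin M → ℝ)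
    (hd : ∀ i j, i ≠ j → 0 ≤ d i j)
    (hα : ∀ i j, i ≠ j → 1 < α i j) (hβ : ∀ i j, i ≠ j → 1 < β i j)
    (hαβp : ∀ i j, i ≠ j → α i j + β i j = p)
    (r R : ℝ)
    (hR : ∀ i, ∀ t ≥ R,
      2 * a i * t - (p * b i - 2 * ∑ j ∈ Finset.univ.filter (· ≠ i), d i j * β i j)
        * t ^ (p - 1) < 0)
    (hr' : ∀ i, ∀ t : ℝ, 0 < t → t ≤ r →
      0 < 2 * a i * t - p * b i * t ^ (p - 1))
    (s : Fin M → ℝ) (hs : ∀ i, 0 < s i) (i : Fin M) :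
    ((∀ j, s j ≤ s i) → R ≤ s i →
      2 * a i * s i - p * b i * s i ^ (p - 1)
        + 2 * ∑ j ∈ Finset.univ.filter (· ≠ i),
            d i j * β i j * s j ^ α i j * s i ^ (β i j - 1) < 0) ∧
    (s i ≤ r →
      0 < 2 * a i * s i - p * b i * s i ^ (p - 1)
        + 2 * ∑ j ∈ Finset.univ.filter (· ≠ i),
            d i j * β i j * s j ^ α i j * s i ^ (β i j - 1)) := by
  have hne {j} (hj : j ∈ univ.filter (· ≠ i)) : i ≠ j := (mem_filter.mp hj).2.symm
  have hweight : ∀ j ∈ univ.filter (· ≠ i), 0 ≤ d i j * β i j := fun j hj =>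
    mul_nonneg (hd i j (hne hj)) (zero_le_one.trans (hβ i j (hne hj)).le)
  constructor
  · intro hmax hRi
    have hcoupling := coupling_sum_le_of_le _ _ (α i) (β i) s (s i) hweight
      (fun j hj => zero_le_one.trans (hα i j (hne hj)).le) (fun j hj => hαβp i j (hne hj))
      (fun j => (hs j).le) hmax (hs i)
    linarith [hR i (s i) hRi]
  · intro hri
    linarith [hr' i (s i) (hs i) hri,
      coupling_sum_nonneg _ _ (α i) (β i) s (s i) hweight (fun j => (hs j).le) (hs i).le]

/-- Sign of the partial derivative `∂ᵢJ(s)` when `sᵢ` is the largest coordinate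
and `sᵢ ≥ R`, respectively when `sᵢ ≤ r`. -/
theorem partial_deriv_sign
    {M : ℕ} (hM : 1 ≤ M) (p : ℝ) (hp : 2 < p)
    (a b : Fin M → ℝ) (d α β : Fin M → Fin M → ℝ)
    (ha : ∀ i, 0 < a i) (hb : ∀ i, 0 < b i)
    (hd : ∀ i j, i ≠ j → 0 ≤ d i j)
    (hdsymm : ∀ i j, i ≠ j → d i j = d j i)
    (hα : ∀ i j, i ≠ j → 1 < α i j) (hβ : ∀ i j, i ≠ j → 1 < β i j)
    (hαβp : ∀ i j, i ≠ j → α i j + β i j = p)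
    (hsymm : ∀ i j, i ≠ j → α j i = β i j)
    (hcoer : ∀ i, 2 * ∑ j ∈ Finset.univ.filter (· ≠ i), d i j * β i j < p * b i)
    (r R : ℝ) (hr : 0 < r) (hrR : r < R)
    (hR : ∀ i, ∀ t ≥ R,
      2 * a i * t - (p * b i - 2 * ∑ j ∈ Finset.univ.filter (· ≠ i), d i j * β i j)
        * t ^ (p - 1) < 0)
    (hr' : ∀ i, ∀ t : ℝ, 0 < t → t ≤ r →
      0 < 2 * a i * t - p * b i * t ^ (p - 1))
    (s : Fin M → ℝ) (hs : ∀ i, 0 < s i) (i : Fin M) :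
    ((∀ j, s j ≤ s i) → R ≤ s i →
      2 * a i * s i - p * b i * s i ^ (p - 1)
        + 2 * ∑ j ∈ Finset.univ.filter (· ≠ i),
            d i j * β i j * s j ^ α i j * s i ^ (β i j - 1) < 0) ∧
    (s i ≤ r →
      0 < 2 * a i * s i - p * b i * s i ^ (p - 1)
        + 2 * ∑ j ∈ Finset.univ.filter (· ≠ i),
            d i j * β i j * s j ^ α i j * s i ^ (β i j - 1)) :=
  partial_deriv_sign_general p a b d α β hd hα hβ hαβp r R hR hr' s hs i
end

section
/- Let M ≥ 1, p > 2, a_i > 0, d_ij ≥ 0 (i ≠ j), d_ij = d_ji, α_ij, β_ij > 1, α_ij + β_ij = p, α_ji = β_ij. Suppose s ∈ (0,∞)^M satisfies, for each i, the system of equations 2 a_i (s_i − s_i^{p−1}) = 2 Σ_{j≠i} d_ij β_ij (s_i^{p−1} − s_j^{α_ij} s_i^{β_ij−1}). Then s_i = 1 for all i. -/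
/-!
Since `α + β = p`, the coupling term of `j` in the equation of `i` factors as
`sᵢ^{β-1} (sᵢ^α - sⱼ^α)`, so it has the sign of `sᵢ - sⱼ`. At a maximiser `i` of `s` the
right-hand side is therefore `≥ 0`, while the left-hand side `2aᵢ(sᵢ - sᵢ^{p-1})` is `< 0`
if `sᵢ > 1`; hence `max s ≤ 1`. Symmetrically `min s ≥ 1` at a minimiser.
-/

open Finset Real

theorem rpow_sub_one_sub_rpow_mul_rpow {x a b p : ℝ} (hx : 0 < x) (y : ℝ) (hab : a + b = p) :
    x ^ (p - 1) - y ^ a * x ^ (b - 1) = x ^ (b - 1) * (x ^ a - y ^ a) := by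
  rw [← hab, add_sub_assoc, rpow_add hx]
  ring

theorem sub_rpow_neg_of_one_lt {x q : ℝ} (hx : 1 < x) (hq : 1 < q) : x - x ^ q < 0 :=
  sub_neg.2 (by simpa using rpow_lt_rpow_of_exponent_lt hx hq)

theorem sub_rpow_pos_of_lt_one {x q : ℝ} (hx0 : 0 < x) (hx1 : x < 1) (hq : 1 < q) :
    0 < x - x ^ q :=
  sub_pos.2 (by simpa using rpow_lt_rpow_of_exponent_gt hx0 hx1 hq)

section CriticalPoint

variable {ι : Type*} [Fintype ι] [DecidableEq ι] {p : ℝ} {d α β : ι → ι → ℝ} {s : ι → ℝ}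

noncomputable def interactionSum (p : ℝ) (d α β : ι → ι → ℝ) (s : ι → ℝ) (i : ι) : ℝ :=
  ∑ j ∈ univ.filter (· ≠ i), d i j * β i j * (s i ^ (p - 1) - s j ^ α i j * s i ^ (β i j - 1))

theorem interactionSum_nonneg_of_forall_le (hd : ∀ i j, i ≠ j → 0 ≤ d i j)
    (hα : ∀ i j, i ≠ j → 0 ≤ α i j) (hβ : ∀ i j, i ≠ j → 0 ≤ β i j)
    (hαβp : ∀ i j, i ≠ j → α i j + β i j = p) (hs : ∀ i, 0 < s i) {i : ι}
    (hmax : ∀ j, s j ≤ s i) : 0 ≤ interactionSum p d α β s i := by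
  refine sum_nonneg fun j hj => ?_
  have hij : i ≠ j := (mem_filter.1 hj).2.symm
  rw [rpow_sub_one_sub_rpow_mul_rpow (hs i) _ (hαβp i j hij)]
  have hpow : s j ^ α i j ≤ s i ^ α i j := rpow_le_rpow (hs j).le (hmax j) (hα i j hij)
  exact mul_nonneg (mul_nonneg (hd i j hij) (hβ i j hij))
    (mul_nonneg (rpow_nonneg (hs i).le _) (sub_nonneg.2 hpow))

theorem interactionSum_nonpos_of_forall_ge (hd : ∀ i j, i ≠ j → 0 ≤ d i j)
    (hα : ∀ i j, i ≠ j → 0 ≤ α i j) (hβ : ∀ i j, i ≠ j → 0 ≤ β i j)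
    (hαβp : ∀ i j, i ≠ j → α i j + β i j = p) (hs : ∀ i, 0 < s i) {i : ι}
    (hmin : ∀ j, s i ≤ s j) : interactionSum p d α β s i ≤ 0 := by
  refine sum_nonpos fun j hj => ?_
  have hij : i ≠ j := (mem_filter.1 hj).2.symm
  rw [rpow_sub_one_sub_rpow_mul_rpow (hs i) _ (hαβp i j hij)]
  have hpow : s i ^ α i j ≤ s j ^ α i j := rpow_le_rpow (hs i).le (hmin j) (hα i j hij)
  exact mul_nonpos_of_nonneg_of_nonpos (mul_nonneg (hd i j hij) (hβ i j hij))
    (mul_nonpos_of_nonneg_of_nonpos (rpow_nonneg (hs i).le _) (sub_nonpos.2 hpow))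

theorem le_one_of_forall_le {a : ℝ} (ha : 0 < a) (hp : 2 < p) (hd : ∀ i j, i ≠ j → 0 ≤ d i j)
    (hα : ∀ i j, i ≠ j → 0 ≤ α i j) (hβ : ∀ i j, i ≠ j → 0 ≤ β i j)
    (hαβp : ∀ i j, i ≠ j → α i j + β i j = p) (hs : ∀ i, 0 < s i) {i : ι}
    (hmax : ∀ j, s j ≤ s i)
    (hsys : 2 * a * (s i - s i ^ (p - 1)) = 2 * interactionSum p d α β s i) : s i ≤ 1 := by
  by_contra! h
  have hlhs : 2 * a * (s i - s i ^ (p - 1)) < 0 :=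
    mul_neg_of_pos_of_neg (by positivity) (sub_rpow_neg_of_one_lt h (by linarith))
  linarith [interactionSum_nonneg_of_forall_le hd hα hβ hαβp hs hmax]

theorem one_le_of_forall_ge {a : ℝ} (ha : 0 < a) (hp : 2 < p) (hd : ∀ i j, i ≠ j → 0 ≤ d i j)
    (hα : ∀ i j, i ≠ j → 0 ≤ α i j) (hβ : ∀ i j, i ≠ j → 0 ≤ β i j)
    (hαβp : ∀ i j, i ≠ j → α i j + β i j = p) (hs : ∀ i, 0 < s i) {i : ι}
    (hmin : ∀ j, s i ≤ s j)
    (hsys : 2 * a * (s i - s i ^ (p - 1)) = 2 * interactionSum p d α β s i) : 1 ≤ s i := by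
  by_contra! h
  have hlhs : 0 < 2 * a * (s i - s i ^ (p - 1)) :=
    mul_pos (by positivity) (sub_rpow_pos_of_lt_one (hs i) h (by linarith))
  linarith [interactionSum_nonpos_of_forall_ge hd hα hβ hαβp hs hmin]

end CriticalPoint

theorem unique_critical_point_normalized_general
    {M : ℕ} (p : ℝ) (hp : 2 < p)
    (a : Fin M → ℝ) (d α β : Fin M → Fin M → ℝ)
    (ha : ∀ i, 0 < a i)
    (hd : ∀ i j, i ≠ j → 0 ≤ d i j)
    (hα : ∀ i j, i ≠ j → 1 < α i j) (hβ : ∀ i j, i ≠ j → 1 < β i j)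
    (hαβp : ∀ i j, i ≠ j → α i j + β i j = p)
    (s : Fin M → ℝ) (hs : ∀ i, 0 < s i)
    (hsys : ∀ i, 2 * a i * (s i - s i ^ (p - 1)) =
      2 * ∑ j ∈ Finset.univ.filter (· ≠ i),
        d i j * β i j * (s i ^ (p - 1) - s j ^ α i j * s i ^ (β i j - 1))) :
    ∀ i, s i = 1 := by
  have hα₀ i j (hij : i ≠ j) : 0 ≤ α i j := zero_le_one.trans (hα i j hij).le
  have hβ₀ i j (hij : i ≠ j) : 0 ≤ β i j := zero_le_one.trans (hβ i j hij).le
  intro i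
  have : Nonempty (Fin M) := ⟨i⟩
  obtain ⟨imax, hmax⟩ := Finite.exists_max s
  obtain ⟨imin, hmin⟩ := Finite.exists_min s
  have hmax_le : s imax ≤ 1 :=
    le_one_of_forall_le (ha imax) hp hd hα₀ hβ₀ hαβp hs hmax (hsys imax)
  have hmin_ge : 1 ≤ s imin :=
    one_le_of_forall_ge (ha imin) hp hd hα₀ hβ₀ hαβp hs hmin (hsys imin)
  exact le_antisymm ((hmax i).trans hmax_le) (hmin_ge.trans (hmin i))

/-- If `s ∈ (0,∞)^M` satisfies
`2aᵢ(sᵢ − sᵢ^{p−1}) = 2 Σ_{j≠i} dᵢⱼ βᵢⱼ (sᵢ^{p−1} − sⱼ^{αᵢⱼ} sᵢ^{βᵢⱼ−1})` for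
every `i`, then `s = (1,…,1)`. -/
theorem unique_critical_point_normalized
    {M : ℕ} (hM : 1 ≤ M) (p : ℝ) (hp : 2 < p)
    (a : Fin M → ℝ) (d α β : Fin M → Fin M → ℝ)
    (ha : ∀ i, 0 < a i)
    (hd : ∀ i j, i ≠ j → 0 ≤ d i j)
    (hdsymm : ∀ i j, i ≠ j → d i j = d j i)
    (hα : ∀ i j, i ≠ j → 1 < α i j) (hβ : ∀ i j, i ≠ j → 1 < β i j)
    (hαβp : ∀ i j, i ≠ j → α i j + β i j = p)
    (hsymm : ∀ i j, i ≠ j → α j i = β i j)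
    (s : Fin M → ℝ) (hs : ∀ i, 0 < s i)
    (hsys : ∀ i, 2 * a i * (s i - s i ^ (p - 1)) =
      2 * ∑ j ∈ Finset.univ.filter (· ≠ i),
        d i j * β i j * (s i ^ (p - 1) - s j ^ α i j * s i ^ (β i j - 1))) :
    ∀ i, s i = 1 :=
  unique_critical_point_normalized_general p hp a d α β ha hd hα hβ hαβp s hs hsys
end

section
/- Let G be a compact group acting continuously on ℝ^N (N ≥ 1) by linear isometries, and suppose that the orbit Gx is infinite for every x ∈ ℝ^N \ {0}. Then for each k ∈ ℕ there exists d_k > 0 such that for every x in the unit sphere S^{N−1} there exist g₁,…,g_k ∈ G with |g_i x − g_j x| ≥ d_k for all i ≠ j. -/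
/-!
Each unit vector `x` has `k` distinct orbit points, hence `k` orbit points pairwise more than
some `d_x > 0` apart, and by continuity of the action the same group elements separate every
point near `x` by more than `d_x`. So the sets of points separated by more than `d` form an
increasing open cover of the sphere as `d ↓ 0`, and compactness picks out a single `d`.
-/

open Filter Function Set Topology

theorem Function.Injective.exists_pos_pairwise_lt_dist {ι X : Type*} [Finite ι] [MetricSpace X]
    {f : ι → X} (hf : Injective f) : ∃ d > 0, Pairwise fun i j => d < dist (f i) (f j) := by
  have hsmall : ∀ᶠ d in 𝓝 (0 : ℝ), ∀ i j, i ≠ j → d < dist (f i) (f j) :=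
    eventually_all.2 fun i => eventually_all.2 fun j =>
      eventually_imp_distrib_left.2 fun hij => eventually_lt_nhds (dist_pos.2 (hf.ne hij))
  obtain ⟨d, hd, hpos⟩ :=
    ((hsmall.filter_mono nhdsWithin_le_nhds).and (self_mem_nhdsWithin (s := Ioi 0))).exists
  exact ⟨d, hpos, fun i j hij => hd i j hij⟩

namespace MulAction

variable (G : Type*) {X : Type*} [Monoid G] [MulAction G X]

theorem exists_injective_smul_of_infinite_orbit {x : X} (hx : (orbit G x).Infinite) (k : ℕ) :
    ∃ g : Fin k → G, Injective fun i => g i • x := by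
  choose g hg using fun i : Fin k => (hx.natEmbedding _ i).2
  exact ⟨g, fun i j hij => Fin.ext <| (hx.natEmbedding _).injective <| Subtype.ext <| by
    simpa only [hg] using hij⟩

section PseudoMetricSpace

variable [PseudoMetricSpace X]

def orbitSeparated (k : ℕ) (d : ℝ) : Set X :=
  {x | ∃ g : Fin k → G, Pairwise fun i j => d < dist (g i • x) (g j • x)}

theorem orbitSeparated_anti (k : ℕ) : Antitone (orbitSeparated G k : ℝ → Set X) :=
  fun _ _ hdd' _ ⟨g, hg⟩ => ⟨g, fun _ _ hij => hdd'.trans_lt (hg hij)⟩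

theorem isOpen_orbitSeparated [ContinuousConstSMul G X] (k : ℕ) (d : ℝ) :
    IsOpen (orbitSeparated G k d : Set X) := by
  simp only [orbitSeparated, Pairwise, ofPred_exists, ofPred_forall]
  exact isOpen_iUnion fun g => isOpen_iInter_of_finite fun i => isOpen_iInter_of_finite fun j =>
    isOpen_iInter_of_finite fun _ => isOpen_lt continuous_const
      ((continuous_const_smul _).dist (continuous_const_smul _))

end PseudoMetricSpace

variable [MetricSpace X]

theorem exists_pos_mem_orbitSeparated {x : X} (hx : (orbit G x).Infinite) (k : ℕ) :
    ∃ d > 0, x ∈ orbitSeparated G k d := by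
  obtain ⟨g, hg⟩ := exists_injective_smul_of_infinite_orbit G hx k
  obtain ⟨d, hd, hsep⟩ := hg.exists_pos_pairwise_lt_dist
  exact ⟨d, hd, g, hsep⟩

theorem _root_.IsCompact.exists_pos_subset_orbitSeparated [ContinuousConstSMul G X] {K : Set X}
    (hK : IsCompact K) (horb : ∀ x ∈ K, (orbit G x).Infinite) (k : ℕ) :
    ∃ d > 0, K ⊆ orbitSeparated G k d := by
  have hcover : K ⊆ ⋃ d : Ioi (0 : ℝ), orbitSeparated G k d := fun x hx =>
    have ⟨d, hd, hxd⟩ := exists_pos_mem_orbitSeparated G (horb x hx) k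
    mem_iUnion.2 ⟨⟨d, hd⟩, hxd⟩
  have hdir : Directed (· ⊆ ·) fun d : Ioi (0 : ℝ) => (orbitSeparated G k d : Set X) :=
    fun d d' => ⟨⟨min d d', lt_min d.2.out d'.2.out⟩,
      orbitSeparated_anti G k (min_le_left _ _), orbitSeparated_anti G k (min_le_right _ _)⟩
  obtain ⟨⟨d, hd⟩, hKd⟩ :=
    hK.elim_directed_cover _ (fun d : Ioi (0 : ℝ) => isOpen_orbitSeparated G k d) hcover hdir
  exact ⟨d, hd, hKd⟩

end MulAction

open scoped RealInnerProductSpace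

theorem orbit_separation_general {N : ℕ}
    (G : Type*) [Group G] [TopologicalSpace G]
    [MulAction G (EuclideanSpace ℝ (Fin N))]
    [ContinuousSMul G (EuclideanSpace ℝ (Fin N))]
    (horb : ∀ x : EuclideanSpace ℝ (Fin N), x ≠ 0 →
      (MulAction.orbit G x).Infinite) :
    ∀ k : ℕ, ∃ d > (0 : ℝ), ∀ x : EuclideanSpace ℝ (Fin N), ‖x‖ = 1 →
      ∃ g : Fin k → G, ∀ i j, i ≠ j → d ≤ dist (g i • x) (g j • x) := by
  intro k
  have hsphere_orb : ∀ x ∈ Metric.sphere (0 : EuclideanSpace ℝ (Fin N)) 1,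
      (MulAction.orbit G x).Infinite := fun x hx => horb x (ne_zero_of_mem_unit_sphere ⟨x, hx⟩)
  obtain ⟨d, hd, hsphere⟩ :=
    (isCompact_sphere _ _).exists_pos_subset_orbitSeparated G hsphere_orb k
  refine ⟨d, hd, fun x hx => ?_⟩
  obtain ⟨g, hg⟩ := hsphere (mem_sphere_zero_iff_norm.2 hx)
  exact ⟨g, fun i j hij => (hg hij).le⟩

/-- Orbit-separation lemma: if a compact group acts continuously on `ℝ^N` by
linear isometries and every nonzero point has infinite orbit, then for each `k`
there is `d_k > 0` such that every unit vector has `k` orbit points pairwise at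
distance at least `d_k`. -/
theorem orbit_separation {N : ℕ} (hN : 1 ≤ N)
    (G : Type*) [Group G] [TopologicalSpace G] [IsTopologicalGroup G] [CompactSpace G]
    [MulAction G (EuclideanSpace ℝ (Fin N))]
    [ContinuousSMul G (EuclideanSpace ℝ (Fin N))]
    (hlin : ∀ g : G, IsLinearMap ℝ (fun x : EuclideanSpace ℝ (Fin N) => g • x))
    (hiso : ∀ (g : G) (x y : EuclideanSpace ℝ (Fin N)),
      dist (g • x) (g • y) = dist x y)
    (horb : ∀ x : EuclideanSpace ℝ (Fin N), x ≠ 0 →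
      (MulAction.orbit G x).Infinite) :
    ∀ k : ℕ, ∃ d > (0 : ℝ), ∀ x : EuclideanSpace ℝ (Fin N), ‖x‖ = 1 →
      ∃ g : Fin k → G, ∀ i j, i ≠ j → d ≤ dist (g i • x) (g j • x) :=
  orbit_separation_general G horb
end
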